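/- Let (A,*) be an associative algebra over a field of characteristic zero and let R₁, R₂ : A → A be commuting Rota-Baxter operators of weight zero, i.e. R₁R₂ = R₂R₁ and Rᵢ(x)*Rᵢ(y) = Rᵢ(Rᵢ(x)*y + x*Rᵢ(y)) for i = 1,2 and all x,y ∈ A. Then the four products x↘y = R₁R₂(x)*y, x↗y = R₁(x)*R₂(y), x↙y = R₂(x)*R₁(y), x↖y = x*R₁R₂(y) make A a quadri-algebra. -/

import Mathlib

open LinearMap

/-- Quadri-algebra axioms for the four products ↘ (`dse`), ↗ (`dne`), ↖ (`dnw`), ↙ (`dsw`). -/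
def IsQuadri {K A : Type*} [Field K] [AddCommGroup A] [Module K A]
    (dse dne dnw dsw : A →ₗ[K] A →ₗ[K] A) : Prop :=
  (∀ x y z : A, dnw (dnw x y) z = dnw x (dse y z + dne y z + dnw y z + dsw y z)) ∧
  (∀ x y z : A, dnw (dne x y) z = dne x (dnw y z + dsw y z)) ∧
  (∀ x y z : A, dne (dne x y + dnw x y) z = dne x (dne y z + dse y z)) ∧
  (∀ x y z : A, dnw (dsw x y) z = dsw x (dne y z + dnw y z)) ∧
  (∀ x y z : A, dnw (dse x y) z = dse x (dnw y z)) ∧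
  (∀ x y z : A, dne (dse x y + dsw x y) z = dse x (dne y z)) ∧
  (∀ x y z : A, dsw (dnw x y + dsw x y) z = dsw x (dse y z + dsw y z)) ∧
  (∀ x y z : A, dsw (dne x y + dse x y) z = dse x (dsw y z)) ∧
  (∀ x y z : A, dse (dse x y + dne x y + dnw x y + dsw x y) z = dse x (dse y z))

/-!
Each quadri-algebra axiom, after unfolding the four products and using associativity of `*`,
is either trivial or one application of the Rota-Baxter identity of `R₁`, of `R₂`, or of the
product `R₁R₂`. For commuting `R₁`, `R₂` the latter satisfies
`R₁R₂(a) * R₁R₂(b) = R₁R₂(a ↘ b + a ↗ b + a ↖ b + a ↙ b)`,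
obtained by applying the identity of `R₁` and then that of `R₂` twice.
-/

section RotaBaxter

variable {K A : Type*} [CommSemiring K] [AddCommMonoid A] [Module K A]

def IsRotaBaxter (mul : A →ₗ[K] A →ₗ[K] A) (R : A →ₗ[K] A) : Prop :=
  ∀ x y : A, mul (R x) (R y) = R (mul (R x) y + mul x (R y))

theorem IsRotaBaxter.mul_comp_apply_comp_apply {mul : A →ₗ[K] A →ₗ[K] A} {R₁ R₂ : A →ₗ[K] A}
    (hR₁ : IsRotaBaxter mul R₁) (hR₂ : IsRotaBaxter mul R₂) (hcomm : R₁ ∘ₗ R₂ = R₂ ∘ₗ R₁)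
    (a b : A) :
    mul (R₁ (R₂ a)) (R₁ (R₂ b)) =
      R₁ (R₂ (mul (R₁ (R₂ a)) b + mul (R₁ a) (R₂ b) + mul a (R₁ (R₂ b)) +
        mul (R₂ a) (R₁ b))) := by
  have hc : ∀ x : A, R₁ (R₂ x) = R₂ (R₁ x) := LinearMap.congr_fun hcomm
  rw [hR₁ (R₂ a) (R₂ b), hc a, hR₂ (R₁ a) b, hc b, hR₂ a (R₁ b), ← map_add R₂]
  simp only [hc]
  congr 2
  abel

end RotaBaxter

theorem commuting_rotaBaxter_pair_gives_quadri_general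
    {K A : Type*} [Field K] [AddCommGroup A] [Module K A]
    (mul : A →ₗ[K] A →ₗ[K] A)
    (hassoc : ∀ x y z : A, mul (mul x y) z = mul x (mul y z))
    (R₁ R₂ : A →ₗ[K] A)
    (hcomm : R₁ ∘ₗ R₂ = R₂ ∘ₗ R₁)
    (hRB1 : ∀ x y : A, mul (R₁ x) (R₁ y) = R₁ (mul (R₁ x) y + mul x (R₁ y)))
    (hRB2 : ∀ x y : A, mul (R₂ x) (R₂ y) = R₂ (mul (R₂ x) y + mul x (R₂ y))) :
    IsQuadri (mul ∘ₗ (R₁ ∘ₗ R₂)) ((mul ∘ₗ R₁).compl₂ R₂) (mul.compl₂ (R₁ ∘ₗ R₂))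
      ((mul ∘ₗ R₂).compl₂ R₁) := by
  have hc : ∀ x : A, R₁ (R₂ x) = R₂ (R₁ x) := LinearMap.congr_fun hcomm
  have hRB12 := IsRotaBaxter.mul_comp_apply_comp_apply hRB1 hRB2 hcomm
  refine ⟨?_, ?_, ?_, ?_, ?_, ?_, ?_, ?_, ?_⟩ <;> intro x y z <;>
    simp only [compl₂_apply, comp_apply]
  · rw [hassoc, hRB12 y z]
  · rw [hassoc, hc z, hRB2 y (R₁ z), add_comm]
  · rw [← hRB1 x (R₂ y), hassoc, hc y, hRB2 (R₁ y) z, add_comm]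
  · rw [hassoc, hRB1 y (R₂ z)]
  · rw [hassoc]
  · rw [← hRB1 (R₂ x) y, hassoc]
  · rw [hc y, add_comm (mul x (R₂ (R₁ y))), ← hRB2 x (R₁ y), hassoc, ← hc y, hRB1 (R₂ y) z]
  · rw [hc x, add_comm (mul (R₁ x) (R₂ y)), ← hRB2 (R₁ x) y, hassoc]
  · rw [← hRB12 x y, hassoc]

/-- Corollary 3.4.9: a pair of commuting Rota-Baxter operators `R₁`, `R₂` (of weight
zero) on an associative algebra `(A, *)` induces a quadri-algebra structure on `A` by
`x↘y = R₁R₂(x)*y`, `x↗y = R₁(x)*R₂(y)`, `x↙y = R₂(x)*R₁(y)`, `x↖y = x*R₁R₂(y)`. -/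
theorem commuting_rotaBaxter_pair_gives_quadri
    {K A : Type*} [Field K] [CharZero K] [AddCommGroup A] [Module K A]
    (mul : A →ₗ[K] A →ₗ[K] A)
    (hassoc : ∀ x y z : A, mul (mul x y) z = mul x (mul y z))
    (R₁ R₂ : A →ₗ[K] A)
    (hcomm : R₁ ∘ₗ R₂ = R₂ ∘ₗ R₁)
    (hRB1 : ∀ x y : A, mul (R₁ x) (R₁ y) = R₁ (mul (R₁ x) y + mul x (R₁ y)))
    (hRB2 : ∀ x y : A, mul (R₂ x) (R₂ y) = R₂ (mul (R₂ x) y + mul x (R₂ y))) :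
    IsQuadri (mul ∘ₗ (R₁ ∘ₗ R₂)) ((mul ∘ₗ R₁).compl₂ R₂) (mul.compl₂ (R₁ ∘ₗ R₂))
      ((mul ∘ₗ R₂).compl₂ R₁) :=
  commuting_rotaBaxter_pair_gives_quadri_general mul hassoc R₁ R₂ hcomm hRB1 hRB2
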